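/- arXiv:1909.10261 — 3 statements merged into one kernel-verified Lean document; each statement's English description precedes it below -/
import Mathlib

section
/- For a regular language L given by a DFA with state set Q, the family of cut-languages {cut_{i,j}(L) : i, j ≥ 0} contains at most 2^{2|Q|} distinct languages (in particular, it is finite). -/
/-- The cut-language: middle parts of words of `L` after removing a prefix of
length `i` and a suffix of length `j`. -/
def cutL {α : Type*} (i j : ℕ) (L : Set (List α)) : Set (List α) :=
  {y | ∃ x z : List α, x.length = i ∧ z.length = j ∧ x ++ y ++ z ∈ L}

/-- For a regular language recognized by a DFA with state set `Q`, there are at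
most `2 ^ (2 * |Q|)` distinct cut-languages; in particular finitely many. -/
theorem cut_languages_finite {α Q : Type*} [Fintype Q] (M : DFA α Q) :
    {K : Set (List α) | ∃ i j : ℕ, K = cutL i j M.accepts}.Finite ∧
    {K : Set (List α) | ∃ i j : ℕ, K = cutL i j M.accepts}.ncard ≤ 2 ^ (2 * Fintype.card Q) := by
  classical
  set f : Set Q × Set Q → Set (List α) := fun p =>
    {y | ∃ q ∈ p.1, M.evalFrom q y ∈ p.2} with hf
  have key : ∀ i j : ℕ, cutL i j M.accepts =
      f ({q | ∃ x : List α, x.length = i ∧ M.evalFrom M.start x = q},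
         {q | ∃ z : List α, z.length = j ∧ M.evalFrom q z ∈ M.accept}) := by
    intro i j
    ext y
    simp only [cutL, hf, Set.mem_setOf_eq]
    constructor
    · rintro ⟨x, z, hx, hz, hacc⟩
      change (x ++ y ++ z ∈ M.accepts) at hacc
      rw [DFA.mem_accepts] at hacc
      simp only [DFA.eval, DFA.evalFrom_of_append] at hacc
      exact ⟨_, ⟨x, hx, rfl⟩, z, hz, hacc⟩
    · rintro ⟨q, ⟨x, hx, rfl⟩, z, hz, hacc⟩
      refine ⟨x, z, hx, hz, ?_⟩
      change (x ++ y ++ z ∈ M.accepts)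
      rw [DFA.mem_accepts]
      simp only [DFA.eval, DFA.evalFrom_of_append]
      exact hacc
  have hsub : {K : Set (List α) | ∃ i j, K = cutL i j M.accepts} ⊆ Set.range f := by
    rintro K ⟨i, j, rfl⟩
    exact ⟨_, (key i j).symm⟩
  have hfin : (Set.range f).Finite := Set.finite_range f
  refine ⟨hfin.subset hsub, ?_⟩
  calc {K : Set (List α) | ∃ i j, K = cutL i j M.accepts}.ncard
      ≤ (Set.range f).ncard := Set.ncard_le_ncard hsub hfin
    _ ≤ (Set.univ : Set (Set Q × Set Q)).ncard := by
        rw [← Set.image_univ]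
        exact Set.ncard_image_le Set.finite_univ
    _ = 2 ^ (2 * Fintype.card Q) := by
        rw [Set.ncard_univ]
        simp [Nat.card_eq_fintype_card, Fintype.card_prod, ← pow_add, two_mul]
end

section
/- If a language L over alphabet Σ (with |Σ| ≥ 2) has an infinite restriction L|_N to a set of lengths N that excludes some factor w with |w| = c > 0, then L is not (εn)-trivial for any ε < 1/c; concretely, for every n ∈ N there exists a word v of length n with dist(v, L) ≥ ⌊n/c⌋, while L ∩ Σⁿ ≠ ∅. -/
variable {α : Type*} [DecidableEq α]

def OccursAt (w v : List α) (i : ℕ) : Prop :=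
  i + w.length ≤ v.length ∧ (v.drop i).take w.length = w

def hdist (u v : List α) : ℕ :=
  ((u.zip v).filter fun p => p.1 ≠ p.2).length

private lemma zip_exists_ne {a b : List α} (h : a.length = b.length) (hne : a ≠ b) :
    ∃ p ∈ a.zip b, p.1 ≠ p.2 := by
  induction a generalizing b with
  | nil => cases b with
    | nil => exact absurd rfl hne
    | cons x xs => simp at h
  | cons x xs ih =>
    cases b with
    | nil => simp at h
    | cons y ys =>
      by_cases hxy : x = y
      · subst hxy
        have hne' : xs ≠ ys := fun hh => hne (by rw [hh])
        obtain ⟨p, hp, hpne⟩ := ih (by simpa using h) hne'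
        refine ⟨p, ?_, hpne⟩
        simp only [List.zip_eq_zipWith] at hp ⊢
        simp [hp]
      · exact ⟨(x, y), by simp, hxy⟩

private lemma drop_join_replicate (w : List α) (c : ℕ) (hc : w.length = c) :
    ∀ k m, k ≤ m → ((List.replicate m w).flatten).drop (k * c) =
      (List.replicate (m - k) w).flatten := by
  intro k
  induction k with
  | zero => intro m _; simp
  | succ k ih =>
    intro m hm
    cases m with
    | zero => omega
    | succ m =>
      have : (List.replicate (m + 1) w).flatten = w ++ (List.replicate m w).flatten := by
        simp [List.replicate_succ]
      rw [this]
      have : (k + 1) * c = c + k * c := by ring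
      rw [this, ← List.drop_drop, ← hc, List.drop_left, hc]
      rw [ih m (by omega)]
      have h3 : m + 1 - (k + 1) = m - k := by omega
      rw [h3]

/-- If the restriction `L|_N` is infinite and excludes a factor `w` of length
`c > 0`, then for every `n ∈ N` there is a word `v` of length `n` with
`dist(v, L) ≥ ⌊n / c⌋` (every word of `L` of length `n` is at Hamming distance
at least `⌊n / c⌋` from `v`), while `L` contains a word of length `n`.
In particular `L` is not `(ε n)`-trivial for `ε < 1 / c`. -/
theorem not_trivial_of_excluded_factor [Nontrivial α]
    (L : Set (List α)) (N : Set ℕ) (w : List α) (c : ℕ)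
    (hc : w.length = c) (hcpos : 0 < c)
    (hinf : {u ∈ L | u.length ∈ N}.Infinite)
    (hex : ∀ u ∈ L, u.length ∈ N → ∀ i, ¬ OccursAt w u i) :
    ∀ n ∈ N, (∃ u ∈ L, u.length = n) →
      ∃ v : List α, v.length = n ∧ ∀ u ∈ L, u.length = n → n / c ≤ hdist v u := by
  intro n hnN _
  set J : List α := (List.replicate n w).flatten with hJ
  have hJlen : J.length = n * c := by simp [hJ, hc]
  set v : List α := J.take n with hv
  have hvlen : v.length = n := by
    simp only [hv, List.length_take, hJlen]
    exact min_eq_left (Nat.le_mul_of_pos_right n hcpos)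
  refine ⟨v, hvlen, ?_⟩
  intro u huL hulen
  -- v's k-th block equals w
  have hblock : ∀ k, k * c + c ≤ n → (v.drop (k * c)).take c = w := by
    intro k hk
    have hkn : k ≤ n := le_trans (Nat.le_mul_of_pos_right k hcpos) (by omega)
    have hkltn : k < n := by
      have : k * c < n := by omega
      calc k ≤ k * c := Nat.le_mul_of_pos_right k hcpos
        _ < n := this
    have h1 : v.drop (k * c) = (J.drop (k * c)).take (n - k * c) := by
      rw [hv, List.drop_take]
    have h2 : J.drop (k * c) = (List.replicate (n - k) w).flatten :=
      drop_join_replicate w c hc k n hkn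
    rw [h1, h2, List.take_take]
    have hmin : min c (n - k * c) = c := min_eq_left (by omega)
    rw [hmin]
    have : n - k = (n - k - 1) + 1 := by omega
    rw [this, List.replicate_succ]
    simp only [List.flatten_cons]
    rw [← hc, List.take_left]
  -- each block of u differs from w
  have hune : ∀ k, k * c + c ≤ n → (u.drop (k * c)).take c ≠ w := by
    intro k hk habs
    exact hex u huL (hulen ▸ hnN) (k * c) ⟨by rw [hc, hulen]; omega, by rw [hc]; exact habs⟩
  set p : α × α → Bool := fun q => decide (q.1 ≠ q.2) with hp
  have hdist_eq : hdist v u = (v.zip u).countP p := by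
    rw [hdist, List.countP_eq_length_filter]
  -- count mismatches in the first k blocks
  have key : ∀ k, k * c ≤ n → k ≤ ((v.zip u).take (k * c)).countP p := by
    intro k
    induction k with
    | zero => intro _; simp
    | succ k ih =>
      intro hk
      have hk' : k * c + c ≤ n := by
        have : (k + 1) * c = k * c + c := by ring
        omega
      have hstep : (k + 1) * c = k * c + c := by ring
      rw [hstep, List.take_add, List.countP_append]
      have h1 : k ≤ ((v.zip u).take (k * c)).countP p := ih (by omega)
      have hblkzip : (((v.zip u).drop (k * c)).take c) =
          ((v.drop (k * c)).take c).zip ((u.drop (k * c)).take c) := by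
        simp only [List.zip_eq_zipWith, List.drop_zipWith, List.take_zipWith]
      have hlens : ((v.drop (k * c)).take c).length = ((u.drop (k * c)).take c).length := by
        simp [hvlen, hulen]
      have hne : ((v.drop (k * c)).take c) ≠ ((u.drop (k * c)).take c) := by
        rw [hblock k hk']
        exact fun h => hune k hk' h.symm
      obtain ⟨q, hq, hqne⟩ := zip_exists_ne hlens hne
      have hpos : 0 < (((v.zip u).drop (k * c)).take c).countP p := by
        rw [hblkzip]
        exact List.countP_pos_iff.mpr ⟨q, hq, by simpa [hp] using hqne⟩
      omega
  have hfinal : n / c ≤ ((v.zip u).take (n / c * c)).countP p :=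
    key (n / c) (Nat.div_mul_le_self n c)
  calc n / c ≤ ((v.zip u).take (n / c * c)).countP p := hfinal
    _ ≤ (v.zip u).countP p := by
        conv_rhs => rw [← List.take_append_drop (n / c * c) (v.zip u)]
        rw [List.countP_append]; omega
    _ = hdist v u := hdist_eq.symm
end

section
/- For every real ξ with 0 < ξ < 1, it holds that 1/2 + ξ/8 ≤ (1/2 − ξ/8)^{1−ξ}. -/
theorem bernoulli_key_ineq (ξ : ℝ) (h0 : 0 < ξ) (h1 : ξ < 1) :
    1 / 2 + ξ / 8 ≤ (1 / 2 - ξ / 8) ^ ((1 : ℝ) - ξ) := by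
  set a : ℝ := 1 / 2 - ξ / 8 with ha
  have ha0 : 0 < a := by simp only [ha]; linarith
  have ha38 : (3:ℝ)/8 ≤ a := by simp only [ha]; linarith
  have ha12 : a ≤ 1/2 := by simp only [ha]; linarith
  have hrw : a ^ ((1:ℝ) - ξ) = a * Real.exp (-ξ * Real.log a) := by
    rw [Real.rpow_def_of_pos ha0,
      show Real.log a * (1 - ξ) = Real.log a + (-ξ * Real.log a) by ring,
      Real.exp_add, Real.exp_log ha0]
  have hlog : Real.log a ≤ -Real.log 2 := by
    have := Real.log_le_log ha0 ha12
    rwa [show (1:ℝ)/2 = 2⁻¹ by norm_num, Real.log_inv] at this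
  have hlog2 : (2:ℝ)/3 ≤ Real.log 2 := by
    have := Real.log_two_gt_d9; linarith
  have hexp : 1 + ξ * Real.log 2 ≤ Real.exp (-ξ * Real.log a) := by
    have h1' : ξ * Real.log 2 ≤ -ξ * Real.log a := by nlinarith
    have := Real.add_one_le_exp (ξ * Real.log 2)
    calc 1 + ξ * Real.log 2 = ξ * Real.log 2 + 1 := by ring
    _ ≤ Real.exp (ξ * Real.log 2) := this
    _ ≤ Real.exp (-ξ * Real.log a) := Real.exp_le_exp.mpr h1'
  rw [hrw]
  have : a * (1 + ξ * Real.log 2) ≤ a * Real.exp (-ξ * Real.log a) :=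
    mul_le_mul_of_nonneg_left hexp ha0.le
  have key : 1/2 + ξ/8 ≤ a * (1 + ξ * Real.log 2) := by
    have hal : 1/4 ≤ a * Real.log 2 := by nlinarith
    have : a + ξ/4 ≤ a * (1 + ξ * Real.log 2) := by
      nlinarith [mul_le_mul_of_nonneg_left hal h0.le]
    simp only [ha] at this ⊢; linarith
  exact key.trans this
end
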